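/- Let F be a subfield of ℂ and let f and g be generalized palindromes with f̄ = u·z^j·f and ḡ = v·z^k·g for some u, v ∈ ℂ^× and j, k ∈ ℤ. Suppose that f, g ∈ F[z,z⁻¹] and that f and g are equicorrelational. Then either f = g = 0, or else there exists w ∈ F^× with v/u = conj(w)/w and moreover j ≡ k (mod 2). -/

import Mathlib

open LaurentPolynomial
open scoped Classical

/-- The length of a Laurent polynomial: 1 plus the difference between the maximal and
minimal exponents occurring with nonzero coefficient; the length of 0 is 0. -/
noncomputable def len {F : Type*} [Field F] (f : LaurentPolynomial F) : ℤ :=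
  if h : f = 0 then 0
  else f.coeff.support.max' (Finsupp.support_nonempty_iff.mpr
       (fun h' => h (AddMonoidAlgebra.coeff_injective h')))
     - f.coeff.support.min' (Finsupp.support_nonempty_iff.mpr
       (fun h' => h (AddMonoidAlgebra.coeff_injective h'))) + 1

/-- Substitution `f(z) ↦ f(z^m)`: the image of `f` under the ring homomorphism
sending `z` to `z^m`. -/
noncomputable def subst {F : Type*} [Field F] (m : ℤ) (f : LaurentPolynomial F) :
    LaurentPolynomial F :=
  AddMonoidAlgebra.mapDomainRingHom F (AddMonoidHom.mulLeft m) f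

/-- The subring `F[z,z⁻¹]` of `E[z,z⁻¹]` consisting of Laurent polynomials all of whose
coefficients lie in the subfield `F` of `E`. -/
noncomputable def LRing {E : Type*} [Field E] (F : Subfield E) :
    Subring (LaurentPolynomial E) where
  carrier := {f : LaurentPolynomial E | ∀ n : ℤ, f.coeff n ∈ F}
  zero_mem' := fun n => F.zero_mem
  one_mem' := by
    intro n
    rw [AddMonoidAlgebra.one_def, AddMonoidAlgebra.coeff_single, Finsupp.single_apply]
    split_ifs
    · exact F.one_mem
    · exact F.zero_mem
  add_mem' := by
    intro f g hf hg n
    rw [AddMonoidAlgebra.coeff_add, Finsupp.add_apply]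
    exact add_mem (hf n) (hg n)
  neg_mem' := by
    intro f hf n
    rw [AddMonoidAlgebra.coeff_neg, Finsupp.neg_apply]
    exact neg_mem (hf n)
  mul_mem' := by
    intro f g hf hg n
    rw [AddMonoidAlgebra.coeff_mul]
    refine sum_mem fun a ha => sum_mem fun b hb => ?_
    dsimp only
    split_ifs
    · exact mul_mem (hf a) (hg b)
    · exact zero_mem F

/-- The conjugate of `f(z) = Σ f_j z^j`, namely `f̄(z) = Σ conj(f_j) z^{-j}`. -/
noncomputable def lconj (f : LaurentPolynomial ℂ) : LaurentPolynomial ℂ :=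
  AddMonoidAlgebra.ofCoeff
    (Finsupp.equivMapDomain (Equiv.neg ℤ) (Finsupp.mapRange (starRingEnd ℂ) (map_zero _) f.coeff))

/-- `f` and `g` are equicorrelational: `f·f̄ = c·g·ḡ` for some positive real `c`. -/
def Equicorrelational (f g : LaurentPolynomial ℂ) : Prop :=
  ∃ c : ℝ, 0 < c ∧ f * lconj f = C (c : ℂ) * (g * lconj g)

/-- `f` and `g` are trivially equicorrelational: `g` is a `ℂ[z,z⁻¹]`-associate of `f`
or of `f̄`. -/
def TrivEquicorrelational (f g : LaurentPolynomial ℂ) : Prop :=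
  Associated g f ∨ Associated g (lconj f)

/-- A generalized palindrome: `f̄` is a `ℂ[z,z⁻¹]`-associate of `f`. -/
def GenPalindrome (f : LaurentPolynomial ℂ) : Prop :=
  Associated (lconj f) f

/-- `g` is an `F[z,z⁻¹]`-associate of `f`: `g = u·f` for some unit `u` of the subring
`F[z,z⁻¹]` of `ℂ[z,z⁻¹]`. -/
def FAssoc (F : Subfield ℂ) (g f : LaurentPolynomial ℂ) : Prop :=
  ∃ u : (LRing F)ˣ, g = ((u : LRing F) : LaurentPolynomial ℂ) * f

/-- The `F[z,z⁻¹]`-associate class of `f`. -/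
def facl (F : Subfield ℂ) (f : LaurentPolynomial ℂ) : Set (LaurentPolynomial ℂ) :=
  {g | FAssoc F g f}

/-- The `F`-trivial equicorrelationality class of `f`: all elements of `F[z,z⁻¹]`
that are trivially equicorrelational to `f`. -/
def fte (F : Subfield ℂ) (f : LaurentPolynomial ℂ) : Set (LaurentPolynomial ℂ) :=
  {g | g ∈ LRing F ∧ TrivEquicorrelational f g}

/-- A `k`-ary sequence: a Laurent polynomial whose support is a segment of consecutive
integers and whose nonzero coefficients are complex `k`-th roots of unity. -/
def IsKary (k : ℕ) (f : LaurentPolynomial ℂ) : Prop :=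
  (∀ i j l : ℤ, i ≤ j → j ≤ l → f.coeff i ≠ 0 → f.coeff l ≠ 0 → f.coeff j ≠ 0) ∧
  ∀ n : ℤ, f.coeff n ≠ 0 → (f.coeff n) ^ k = 1

/-- A binary sequence: a Laurent polynomial whose support is a segment of consecutive
integers and whose nonzero coefficients all lie in `{1, -1}`. -/
def IsBinary (f : LaurentPolynomial ℂ) : Prop :=
  (∀ i j l : ℤ, i ≤ j → j ≤ l → f.coeff i ≠ 0 → f.coeff l ≠ 0 → f.coeff j ≠ 0) ∧
  ∀ n : ℤ, f.coeff n ≠ 0 → f.coeff n = 1 ∨ f.coeff n = -1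


/-!
Since `f̄ = u zʲ f` and `ḡ = v zᵏ g`, equicorrelationality reads `u zʲ f² = c v zᵏ g²`.
Comparing degrees gives `j + 2 deg f = k + 2 deg g`, hence the parity claim, and comparing
leading coefficients `a` of `f` and `b` of `g` gives `u a² = c v b²`. Applying the palindrome
relation twice to a nonzero coefficient shows `|u| = |v| = 1`, so `|a|² = c |b|²`, and then
`w = b / a ∈ F` satisfies `v / u = w̄ / w`.
-/

namespace LaurentPolynomial

variable {R : Type*} [Semiring R] {p q : R[T;T⁻¹]}

theorem degree_eq_supDegree (p : R[T;T⁻¹]) : p.degree = p.supDegree WithBot.some :=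
  Finset.max_eq_sup_withBot _

theorem degree_mul_le : (p * q).degree ≤ p.degree + q.degree := by
  simpa only [degree_eq_supDegree] using
    AddMonoidAlgebra.supDegree_mul_le (fun a b => WithBot.coe_add (a := a) (b := b))

theorem coeff_mul_add_of_degree_le {dp dq : ℤ} (hp : p.degree ≤ dp) (hq : q.degree ≤ dq) :
    (p * q).coeff (dp + dq) = p.coeff dp * q.coeff dq := by
  refine AddMonoidAlgebra.coeff_mul_add_of_uniqueAdd fun a b ha hb hab => ?_
  have ha' : a ≤ dp := WithBot.coe_le_coe.mp ((Finset.le_max ha).trans hp)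
  have hb' : b ≤ dq := WithBot.coe_le_coe.mp ((Finset.le_max hb).trans hq)
  constructor <;> omega

theorem coeff_ne_zero_of_degree_eq {d : ℤ} (hp : p.degree = d) : p.coeff d ≠ 0 :=
  Finsupp.mem_support_iff.mp (Finset.mem_of_max hp)

theorem exists_degree_eq_of_ne_zero (hp : p ≠ 0) : ∃ d : ℤ, p.degree = d :=
  (WithBot.ne_bot_iff_exists.mp (degree_eq_bot_iff.not.mpr hp)).imp fun _ => Eq.symm

theorem degree_mul [NoZeroDivisors R] : (p * q).degree = p.degree + q.degree := by
  rcases eq_or_ne p 0 with rfl | hp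
  · simp
  rcases eq_or_ne q 0 with rfl | hq
  · simp
  obtain ⟨dp, hdp⟩ := exists_degree_eq_of_ne_zero hp
  obtain ⟨dq, hdq⟩ := exists_degree_eq_of_ne_zero hq
  refine degree_mul_le.antisymm ?_
  have hcoeff : (p * q).coeff (dp + dq) ≠ 0 := by
    rw [coeff_mul_add_of_degree_le hdp.le hdq.le]
    exact mul_ne_zero (coeff_ne_zero_of_degree_eq hdp) (coeff_ne_zero_of_degree_eq hdq)
  rw [hdp, hdq, ← WithBot.coe_add]
  exact Finset.le_max (Finsupp.mem_support_iff.mpr hcoeff)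

theorem coeff_C_mul_T_mul (u : R) (j : ℤ) (p : R[T;T⁻¹]) (n : ℤ) :
    (C u * T j * p).coeff n = u * p.coeff (n - j) := by
  rw [← single_eq_C_mul_T, AddMonoidAlgebra.coeff_single_mul_apply, neg_add_eq_sub]

theorem degree_C_mul_T_mul_sq [NoZeroDivisors R] {u : R} (hu : u ≠ 0) (j : ℤ) {d : ℤ}
    (hp : p.degree = d) : (C u * T j * p ^ 2).degree = ↑(j + 2 * d) := by
  rw [degree_mul, degree_C_mul_T j u hu, sq, degree_mul, hp]
  norm_cast
  ring_nf

theorem coeff_C_mul_T_mul_sq (u : R) (j : ℤ) {d : ℤ} (hp : p.degree = d) :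
    (C u * T j * p ^ 2).coeff (j + 2 * d) = u * p.coeff d ^ 2 := by
  rw [coeff_C_mul_T_mul, add_sub_cancel_left, two_mul, sq, sq,
    coeff_mul_add_of_degree_le hp.le hp.le]

end LaurentPolynomial

theorem coeff_lconj (f : LaurentPolynomial ℂ) (n : ℤ) :
    (lconj f).coeff n = starRingEnd ℂ (f.coeff (-n)) := by
  simp [lconj, Finsupp.equivMapDomain_apply]

theorem lconj_eq_zero_iff {f : LaurentPolynomial ℂ} : lconj f = 0 ↔ f = 0 := by
  refine ⟨fun h => LaurentPolynomial.ext fun n => ?_, fun h => ?_⟩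
  · simpa [coeff_lconj] using congrArg (fun p => p.coeff (-n)) h
  · ext n
    simp [coeff_lconj, h]

theorem mul_lconj_self_eq_zero_iff {f : LaurentPolynomial ℂ} : f * lconj f = 0 ↔ f = 0 := by
  rw [mul_eq_zero, lconj_eq_zero_iff, or_self]

theorem conj_coeff_of_lconj_eq {f : LaurentPolynomial ℂ} {u : ℂ} {j : ℤ}
    (hf : lconj f = C u * T j * f) (n : ℤ) :
    starRingEnd ℂ (f.coeff n) = u * f.coeff (-n - j) := by
  simpa [coeff_lconj, coeff_C_mul_T_mul] using congrArg (fun p => p.coeff (-n)) hf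

theorem norm_eq_one_of_lconj_eq {f : LaurentPolynomial ℂ} {u : ℂ} {j : ℤ}
    (hf : lconj f = C u * T j * f) (hf0 : f ≠ 0) : ‖u‖ = 1 := by
  obtain ⟨n, hn⟩ : ∃ n, f.coeff n ≠ 0 := by
    by_contra! h
    exact hf0 (LaurentPolynomial.ext h)
  have hnorm : ‖u‖ ^ 2 * ‖f.coeff n‖ = 1 * ‖f.coeff n‖ := by
    have h1 := congrArg norm (conj_coeff_of_lconj_eq hf n)
    have h2 := congrArg norm (conj_coeff_of_lconj_eq hf (-n - j))
    rw [Complex.norm_conj] at h1 h2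
    rw [show -(-n - j) - j = n by ring, norm_mul] at h2
    rw [norm_mul, h2] at h1
    linear_combination -h1
  exact (pow_eq_one_iff_of_nonneg (norm_nonneg u) two_ne_zero).mp
    (mul_right_cancel₀ (norm_ne_zero_iff.mpr hn) hnorm)

theorem div_eq_conj_div_of_mul_sq_eq {u v a b : ℂ} {c : ℝ} (hc : 0 ≤ c) (hu : ‖u‖ = 1)
    (hv : ‖v‖ = 1) (ha : a ≠ 0) (hb : b ≠ 0) (h : u * a ^ 2 = c * v * b ^ 2) :
    v / u = starRingEnd ℂ (b / a) / (b / a) := by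
  have hnorm : ‖a‖ ^ 2 = c * ‖b‖ ^ 2 := by
    simpa [hu, hv, abs_of_nonneg hc] using congrArg norm h
  have hconj : a * starRingEnd ℂ a = c * (b * starRingEnd ℂ b) := by
    rw [Complex.mul_conj, Complex.mul_conj, Complex.normSq_eq_norm_sq, Complex.normSq_eq_norm_sq]
    exact_mod_cast hnorm
  have hu0 : u ≠ 0 := norm_ne_zero_iff.mp (hu ▸ one_ne_zero)
  have hca : starRingEnd ℂ a ≠ 0 := (map_ne_zero _).mpr ha
  have key : a * (u * a * starRingEnd ℂ b - v * b * starRingEnd ℂ a) = 0 := by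
    linear_combination (starRingEnd ℂ b) * h - v * b * hconj
  rw [map_div₀]
  field_simp
  linear_combination -(mul_eq_zero.mp key).resolve_left ha

theorem stmt14_general (f g : LaurentPolynomial ℂ) (u v : ℂ)
    (j k : ℤ) (hfp : lconj f = C u * T j * f) (hgp : lconj g = C v * T k * g)
    (F : Subfield ℂ) (hfF : f ∈ LRing F) (hgF : g ∈ LRing F)
    (heq : Equicorrelational f g) :
    (f = 0 ∧ g = 0) ∨
      ((∃ w : ℂ, w ∈ F ∧ w ≠ 0 ∧ v / u = (starRingEnd ℂ) w / w) ∧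
        j ≡ k [ZMOD 2]) := by
  obtain ⟨c, hc, hcorr⟩ := heq
  have hc0 : (C (c : ℂ) : LaurentPolynomial ℂ) ≠ 0 := by simpa using hc.ne'
  have hfg : f = 0 ↔ g = 0 := by
    rw [← mul_lconj_self_eq_zero_iff, ← mul_lconj_self_eq_zero_iff (f := g), hcorr,
      mul_eq_zero, or_iff_right hc0]
  by_cases hf : f = 0
  · exact Or.inl ⟨hf, hfg.mp hf⟩
  have hg : g ≠ 0 := hfg.not.mp hf
  obtain ⟨d, hd⟩ := exists_degree_eq_of_ne_zero hf
  obtain ⟨e, he⟩ := exists_degree_eq_of_ne_zero hg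
  have hu := norm_eq_one_of_lconj_eq hfp hf
  have hv := norm_eq_one_of_lconj_eq hgp hg
  have hcv : (c : ℂ) * v ≠ 0 :=
    mul_ne_zero (Complex.ofReal_ne_zero.mpr hc.ne') (norm_ne_zero_iff.mp (hv ▸ one_ne_zero))
  have hsq : C u * T j * f ^ 2 = C ((c : ℂ) * v) * T k * g ^ 2 := by
    rw [map_mul]
    linear_combination hcorr - f * hfp + C (c : ℂ) * g * hgp
  have hdeg : j + 2 * d = k + 2 * e := by
    have := congrArg degree hsq
    rwa [degree_C_mul_T_mul_sq (norm_ne_zero_iff.mp (hu ▸ one_ne_zero)) j hd,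
      degree_C_mul_T_mul_sq hcv k he, WithBot.coe_inj] at this
  have hlead : u * f.coeff d ^ 2 = c * v * g.coeff e ^ 2 := by
    rw [← coeff_C_mul_T_mul_sq u j hd, hsq, hdeg, coeff_C_mul_T_mul_sq _ k he]
  have ha := coeff_ne_zero_of_degree_eq hd
  have hb := coeff_ne_zero_of_degree_eq he
  refine Or.inr ⟨⟨g.coeff e / f.coeff d, F.div_mem (hgF e) (hfF d), div_ne_zero hb ha,
    div_eq_conj_div_of_mul_sq_eq hc.le hu hv ha hb hlead⟩, Int.modEq_iff_dvd.mpr ⟨d - e, by omega⟩⟩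

theorem stmt14 (f g : LaurentPolynomial ℂ) (u v : ℂ) (hu : u ≠ 0) (hv : v ≠ 0)
    (j k : ℤ) (hfp : lconj f = C u * T j * f) (hgp : lconj g = C v * T k * g)
    (F : Subfield ℂ) (hfF : f ∈ LRing F) (hgF : g ∈ LRing F)
    (heq : Equicorrelational f g) :
    (f = 0 ∧ g = 0) ∨
      ((∃ w : ℂ, w ∈ F ∧ w ≠ 0 ∧ v / u = (starRingEnd ℂ) w / w) ∧
        j ≡ k [ZMOD 2]) :=
  stmt14_general f g u v j k hfp hgp F hfF hgF heq
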